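/- Let K ≥ N ≥ 1 be integers, let S ∈ ℂ^{N×N} be Hermitian positive definite, let z, v ∈ ℂ^N with v ≠ 0, and write z̃ = S^{−1/2} z, ṽ = S^{−1/2} v. For b ≥ 0 and α ∈ ℂ define l(b, α) = ((K+1)/(πe))^{N(K+1)} (Re det S)^{−(K+1)} (1+b)^{−1} (1 + b + ‖z̃ − α ṽ‖²)^{−(K+1)} · [((1+b) + ‖P⊥_ṽ (z̃ − α ṽ)‖²)/(1 + ‖P⊥_ṽ (z̃ − α ṽ)‖²)]^{K+1}. Then for each fixed b ≥ 0, sup over α ∈ ℂ of l(b, α) = ((K+1)/(πe))^{N(K+1)} (Re det S)^{−(K+1)} (1+b)^{−1} (1 + ‖P⊥_ṽ z̃‖²)^{−(K+1)}, and consequently sup over b ≥ 0 and α ∈ ℂ of l(b, α) = ((K+1)/(πe))^{N(K+1)} (Re det S)^{−(K+1)} (1 + ‖P⊥_ṽ z̃‖²)^{−(K+1)}, the supremum being attained at b = 0 and α = (ṽ† ṽ)⁻¹ ṽ† z̃. -/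

import Mathlib

open Matrix
open scoped ComplexOrder

/-- Squared Euclidean norm of a complex vector. -/
noncomputable def nsq {N : ℕ} (w : Fin N → ℂ) : ℝ := (star w ⬝ᵥ w).re

/-- Orthogonal projection matrix `P⊥_q = I − q q†/‖q‖²` onto the orthogonal complement
of the span of `q`. -/
noncomputable def projPerp {N : ℕ} (q : Fin N → ℂ) : Matrix (Fin N) (Fin N) ℂ :=
  1 - (star q ⬝ᵥ q)⁻¹ • vecMulVec q (star q)

/-- The square root of a positive semidefinite matrix, as defined in the older Mathlib
(`Matrix.PosSemidef.sqrt`, since removed). -/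
noncomputable def Matrix.PosSemidef.sqrt {n 𝕜 : Type*} [Fintype n] [RCLike 𝕜] [DecidableEq n]
    {A : Matrix n n 𝕜} (hA : A.PosSemidef) : Matrix n n 𝕜 :=
  hA.1.eigenvectorUnitary.1 * diagonal ((↑) ∘ (√·) ∘ hA.1.eigenvalues) *
  (star hA.1.eigenvectorUnitary : Matrix n n 𝕜)

lemma Matrix.PosSemidef.sqrt_mul_self {n 𝕜 : Type*} [Fintype n] [RCLike 𝕜] [DecidableEq n]
    {A : Matrix n n 𝕜} (hA : A.PosSemidef) : hA.sqrt * hA.sqrt = A := by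
  conv_rhs => rw [hA.1.spectral_theorem, Unitary.conjStarAlgAut_apply]
  have hU : (star hA.1.eigenvectorUnitary : Matrix n n 𝕜) * hA.1.eigenvectorUnitary.1 = 1 :=
    Unitary.coe_star_mul_self _
  have hD : diagonal ((↑) ∘ (√·) ∘ hA.1.eigenvalues : n → 𝕜) *
      diagonal ((↑) ∘ (√·) ∘ hA.1.eigenvalues) = diagonal ((↑) ∘ hA.1.eigenvalues) := by
    rw [diagonal_mul_diagonal]
    congr 1; funext i
    simp only [Function.comp_apply, ← RCLike.ofReal_mul]
    rw [Real.mul_self_sqrt (hA.eigenvalues_nonneg i)]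
  simp only [Matrix.PosSemidef.sqrt]
  rw [show ∀ a b c d e f : Matrix n n 𝕜, a * b * c * (d * e * f) = a * b * (c * d) * e * f by
    intro a b c d e f; simp only [Matrix.mul_assoc], hU, Matrix.mul_one, Matrix.mul_assoc _ _ (diagonal _), hD]

lemma nsq_nonneg {N : ℕ} (w : Fin N → ℂ) : 0 ≤ nsq w :=
  (Complex.le_def.mp (dotProduct_star_self_nonneg w)).1

lemma vecMulVec_mulVec' {N : ℕ} (a b w : Fin N → ℂ) :
    vecMulVec a b *ᵥ w = (b ⬝ᵥ w) • a := by
  ext i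
  simp [vecMulVec, mulVec, dotProduct, Finset.mul_sum, mul_comm, mul_left_comm]

lemma projPerp_mulVec {N : ℕ} (q w : Fin N → ℂ) :
    projPerp q *ᵥ w = w - ((star q ⬝ᵥ q)⁻¹ * (star q ⬝ᵥ w)) • q := by
  rw [projPerp, sub_mulVec, one_mulVec, smul_mulVec, vecMulVec_mulVec', smul_smul]

lemma projPerp_invariant {N : ℕ} (q z : Fin N → ℂ) (hn : star q ⬝ᵥ q ≠ 0) (α : ℂ) :
    projPerp q *ᵥ (z - α • q) = projPerp q *ᵥ z := by
  rw [projPerp_mulVec, projPerp_mulVec, dotProduct_sub, dotProduct_smul]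
  ext i
  simp only [Pi.sub_apply, Pi.smul_apply, smul_eq_mul]
  field_simp
  ring

lemma dp_ortho {N : ℕ} (q z : Fin N → ℂ) (hn : star q ⬝ᵥ q ≠ 0) :
    star q ⬝ᵥ (projPerp q *ᵥ z) = 0 := by
  rw [projPerp_mulVec, dotProduct_sub, dotProduct_smul]
  field_simp
  rw [smul_eq_mul, div_mul_cancel₀ _ hn, sub_self]

lemma nsq_add_ortho {N : ℕ} (q a : Fin N → ℂ) (h : star q ⬝ᵥ a = 0) (γ : ℂ) :
    nsq (a + γ • q) = nsq a + Complex.normSq γ * nsq q := by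
  have h2 : star a ⬝ᵥ q = 0 := by
    have := congrArg (starRingEnd ℂ) h
    simpa [dotProduct, Finset.sum_comm, map_sum, mul_comm] using this
  have hexp : star (a + γ • q) ⬝ᵥ (a + γ • q)
      = star a ⬝ᵥ a + ((starRingEnd ℂ) γ * γ) * (star q ⬝ᵥ q) := by
    have hst : star (a + γ • q) = star a + (starRingEnd ℂ) γ • star q := by
      ext i; simp [mul_comm]
    rw [hst, add_dotProduct, dotProduct_add, dotProduct_add, smul_dotProduct,
      dotProduct_smul, dotProduct_smul, h, h2]
    simp only [smul_eq_mul, smul_dotProduct, dotProduct_smul, mul_zero, add_zero]; ring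
  have hγ : (starRingEnd ℂ) γ * γ = (Complex.normSq γ : ℂ) := by
    rw [mul_comm, Complex.mul_conj]
  rw [nsq, hexp, hγ, Complex.add_re, Complex.mul_re]
  simp [nsq]

lemma rpow_neg_nat' (K : ℕ) {x : ℝ} (hx : 0 < x) :
    x ^ (-((K : ℝ) + 1)) = (x ^ (K + 1))⁻¹ := by
  rw [show -((K : ℝ) + 1) = -((K + 1 : ℕ) : ℝ) by push_cast; ring,
    Real.rpow_neg hx.le, Real.rpow_natCast]

/-- Appendix A of the paper. For `u = v` (i.e. `Σ = v v†`) the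
partially-compressed likelihood `l(b,α)` has, for each fixed `b ≥ 0`, supremum over `α`
equal to the indicated expression; consequently the overall supremum over `b ≥ 0` and
`α ∈ ℂ` is attained at `b = 0`, `α = (ṽ†ṽ)⁻¹ṽ†z̃`, so the GLRT coincides with Kelly's
detector. -/
theorem stmt_8 (N K : ℕ) (hN : 1 ≤ N) (hKN : N ≤ K)
    (S : Matrix (Fin N) (Fin N) ℂ) (hS : S.PosDef)
    (z v : Fin N → ℂ) (hv : v ≠ 0) :
    let zt : Fin N → ℂ := hS.posSemidef.sqrt⁻¹ *ᵥ z
    let vt : Fin N → ℂ := hS.posSemidef.sqrt⁻¹ *ᵥ v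
    let l : ℝ → ℂ → ℝ := fun b α =>
      ((K + 1 : ℝ) / (Real.pi * Real.exp 1)) ^ ((N : ℝ) * (K + 1)) *
        S.det.re ^ (-((K : ℝ) + 1)) * (1 + b)⁻¹ *
        (1 + b + nsq (zt - α • vt)) ^ (-((K : ℝ) + 1)) *
        (((1 + b) + nsq (projPerp vt *ᵥ (zt - α • vt))) /
          (1 + nsq (projPerp vt *ᵥ (zt - α • vt)))) ^ (K + 1)
    let bound : ℝ :=
      ((K + 1 : ℝ) / (Real.pi * Real.exp 1)) ^ ((N : ℝ) * (K + 1)) *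
        S.det.re ^ (-((K : ℝ) + 1)) * (1 + nsq (projPerp vt *ᵥ zt)) ^ (-((K : ℝ) + 1))
    (∀ b : ℝ, 0 ≤ b →
        sSup {x : ℝ | ∃ α : ℂ, x = l b α} =
          ((K + 1 : ℝ) / (Real.pi * Real.exp 1)) ^ ((N : ℝ) * (K + 1)) *
            S.det.re ^ (-((K : ℝ) + 1)) * (1 + b)⁻¹ *
            (1 + nsq (projPerp vt *ᵥ zt)) ^ (-((K : ℝ) + 1))) ∧
    (∀ b : ℝ, 0 ≤ b → ∀ α : ℂ, l b α ≤ bound) ∧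
    l 0 ((star vt ⬝ᵥ vt)⁻¹ * (star vt ⬝ᵥ zt)) = bound := by
  intro zt vt l bound
  -- positivity of the determinant
  have hdet : (0 : ℂ) < S.det := hS.det_pos
  have hdetre : 0 < S.det.re := (Complex.lt_def.mp hdet).1
  -- the square root is invertible
  have hdetsqrt : IsUnit (hS.posSemidef.sqrt).det := by
    have h2 : hS.posSemidef.sqrt * hS.posSemidef.sqrt = S := hS.posSemidef.sqrt_mul_self
    have h3 : (hS.posSemidef.sqrt).det * (hS.posSemidef.sqrt).det = S.det := by
      rw [← det_mul, h2]
    have h4 : S.det ≠ 0 := hdet.ne'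
    rw [isUnit_iff_ne_zero]
    intro h0
    rw [h0, zero_mul] at h3
    exact h4 h3.symm
  -- vt ≠ 0
  have hvt : vt ≠ 0 := by
    intro h0
    apply hv
    have hrec : hS.posSemidef.sqrt *ᵥ (hS.posSemidef.sqrt⁻¹ *ᵥ v) = v := by
      rw [mulVec_mulVec, mul_nonsing_inv _ hdetsqrt, one_mulVec]
    have h0' : hS.posSemidef.sqrt⁻¹ *ᵥ v = 0 := h0
    rw [h0', mulVec_zero] at hrec
    exact hrec.symm
  have hnpos : (0 : ℂ) < star vt ⬝ᵥ vt := Matrix.dotProduct_star_self_pos_iff.mpr hvt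
  have hn : star vt ⬝ᵥ vt ≠ 0 := hnpos.ne'
  set A : ℝ := ((K + 1 : ℝ) / (Real.pi * Real.exp 1)) ^ ((N : ℝ) * (K + 1)) *
      S.det.re ^ (-((K : ℝ) + 1)) with hA
  have hApos : 0 < A := by
    apply mul_pos
    · apply Real.rpow_pos_of_pos
      have : 0 < Real.pi * Real.exp 1 := mul_pos Real.pi_pos (Real.exp_pos 1)
      positivity
    · exact Real.rpow_pos_of_pos hdetre _
  set c : ℝ := nsq (projPerp vt *ᵥ zt) with hcdef
  have hc : 0 ≤ c := nsq_nonneg _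
  set β : ℂ := (star vt ⬝ᵥ vt)⁻¹ * (star vt ⬝ᵥ zt) with hβ
  have hinv : ∀ α : ℂ, projPerp vt *ᵥ (zt - α • vt) = projPerp vt *ᵥ zt :=
    projPerp_invariant vt zt hn
  -- decomposition and lower bound for nsq (zt - α • vt)
  have hge : ∀ α : ℂ, c ≤ nsq (zt - α • vt) := by
    intro α
    have hdecomp : zt - α • vt = (projPerp vt *ᵥ zt) + (β - α) • vt := by
      rw [projPerp_mulVec]
      ext i
      simp only [Pi.sub_apply, Pi.add_apply, Pi.smul_apply, smul_eq_mul, hβ]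
      ring
    rw [hdecomp, nsq_add_ortho vt _ (dp_ortho vt zt hn)]
    have := mul_nonneg (Complex.normSq_nonneg (β - α)) (nsq_nonneg vt)
    linarith
  have heqβ : nsq (zt - β • vt) = c := by
    rw [hcdef, projPerp_mulVec]
  -- the simplified form of l
  have hform : ∀ b : ℝ, 0 ≤ b → ∀ α : ℂ, l b α =
      A * (1 + b)⁻¹ * (1 + b + nsq (zt - α • vt)) ^ (-((K : ℝ) + 1)) *
        (((1 + b) + c) / (1 + c)) ^ (K + 1) := by
    intro b hb α
    simp only [l, hinv α, ← hcdef, hA]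
    try ring
  have hval : ∀ b : ℝ, 0 ≤ b →
      A * (1 + b)⁻¹ * (1 + b + c) ^ (-((K : ℝ) + 1)) * (((1 + b) + c) / (1 + c)) ^ (K + 1)
        = A * (1 + b)⁻¹ * (1 + c) ^ (-((K : ℝ) + 1)) := by
    intro b hb
    have h1 : (0:ℝ) < 1 + b + c := by linarith
    have h2 : (0:ℝ) < 1 + c := by linarith
    rw [rpow_neg_nat' K h1, rpow_neg_nat' K h2, div_pow]
    have h3 : (1 + b + c) ^ (K + 1) ≠ 0 := pow_ne_zero _ h1.ne'
    have h4 : (1 + c) ^ (K + 1) ≠ 0 := pow_ne_zero _ h2.ne'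
    field_simp
  -- the attained value
  have hattain : ∀ b : ℝ, 0 ≤ b →
      l b β = A * (1 + b)⁻¹ * (1 + c) ^ (-((K : ℝ) + 1)) := by
    intro b hb
    rw [hform b hb β, heqβ, hval b hb]
  -- the upper bound for fixed b
  have hkey : ∀ b : ℝ, 0 ≤ b → ∀ α : ℂ,
      l b α ≤ A * (1 + b)⁻¹ * (1 + c) ^ (-((K : ℝ) + 1)) := by
    intro b hb α
    rw [hform b hb α, ← hval b hb]
    have h1 : (0:ℝ) < 1 + b + c := by linarith
    have ht := hge α
    have h1t : (0:ℝ) < 1 + b + nsq (zt - α • vt) := by linarith [nsq_nonneg (zt - α • vt)]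
    rw [rpow_neg_nat' K h1, rpow_neg_nat' K h1t]
    have hmono : ((1 + b + nsq (zt - α • vt)) ^ (K + 1))⁻¹ ≤ ((1 + b + c) ^ (K + 1))⁻¹ := by
      apply inv_anti₀ (pow_pos h1 _)
      exact pow_le_pow_left₀ h1.le (by linarith) _
    have hfac : 0 ≤ A * (1 + b)⁻¹ := by positivity
    have hfac2 : (0:ℝ) ≤ (((1 + b) + c) / (1 + c)) ^ (K + 1) := by positivity
    calc A * (1 + b)⁻¹ * ((1 + b + nsq (zt - α • vt)) ^ (K + 1))⁻¹ *
          (((1 + b) + c) / (1 + c)) ^ (K + 1)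
        ≤ A * (1 + b)⁻¹ * ((1 + b + c) ^ (K + 1))⁻¹ * (((1 + b) + c) / (1 + c)) ^ (K + 1) := by
          apply mul_le_mul_of_nonneg_right _ hfac2
          exact mul_le_mul_of_nonneg_left hmono hfac
      _ = _ := rfl
  refine ⟨?_, ?_, ?_⟩
  · intro b hb
    have : ((K + 1 : ℝ) / (Real.pi * Real.exp 1)) ^ ((N : ℝ) * (K + 1)) *
        S.det.re ^ (-((K : ℝ) + 1)) * (1 + b)⁻¹ *
        (1 + nsq (projPerp vt *ᵥ zt)) ^ (-((K : ℝ) + 1))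
        = A * (1 + b)⁻¹ * (1 + c) ^ (-((K : ℝ) + 1)) := by
      rw [hA, ← hcdef]
    rw [this]
    apply IsGreatest.csSup_eq
    constructor
    · exact ⟨β, (hattain b hb).symm⟩
    · rintro x ⟨α, rfl⟩
      exact hkey b hb α
  · intro b hb α
    have hboundeq : bound = A * (1 + c) ^ (-((K : ℝ) + 1)) := by
      simp only [bound, hA, ← hcdef]
    rw [hboundeq]
    calc l b α ≤ A * (1 + b)⁻¹ * (1 + c) ^ (-((K : ℝ) + 1)) := hkey b hb α
      _ ≤ A * 1 * (1 + c) ^ (-((K : ℝ) + 1)) := by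
          apply mul_le_mul_of_nonneg_right _ (Real.rpow_nonneg (by linarith) _)
          apply mul_le_mul_of_nonneg_left _ hApos.le
          rw [inv_le_one_iff₀]
          right; linarith
      _ = A * (1 + c) ^ (-((K : ℝ) + 1)) := by ring
  · have h0 := hattain 0 le_rfl
    have hboundeq : bound = A * (1 + c) ^ (-((K : ℝ) + 1)) := by
      simp only [bound, hA, ← hcdef]
    rw [h0, hboundeq]
    norm_num
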